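/- Let (X, μ, T) be an invertible measure-preserving system, a : ℕ → ℤ a sequence, and f ∈ L^∞(μ) with ∫ f dμ = 0. Suppose limsup_{N→∞} ‖Avg_{n∈[N]} T^{a(n)} f‖_{L²(μ)} > 0. Then there exist N_k → ∞ and a function f̃ ∈ L^∞(μ) with ∫ f̃ dμ = 0 such that f̃ is a weak L² limit of averages of the form Avg_{n∈[N_k]} T^{−a(n)} conj(g_k) with ‖g_k‖_∞ uniformly bounded, ∫ f · f̃ dμ > 0, and limsup_{k→∞} ‖Avg_{n∈[N_k]} T^{a(n)} f̃‖_{L²(μ)} > 0. -/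

import Mathlib

/-!
Write `g_N = Avg_{n ∈ [N]} T^{a(n)} f`. Bounded sequences in a Hilbert space have weakly convergent
subsequences, so along a subsequence on which `‖g_N‖₂² > b > 0` the dual functions
`Avg_{n ∈ [N]} T^{-a(n)} conj g_N` converge weakly in `L²` to some `f̃`. Since each `T^m`
preserves `μ`, an average can be moved from one factor of an integral to the other:
`∫ (Avg T^{-a(n)} conj g_N) q = ∫ conj g_N · Avg T^{a(n)} q`. For `q = f` this is `‖g_N‖₂²`, whence
`Re ∫ f f̃ ≥ b`; for `q = conj f̃` Cauchy–Schwarz bounds it by `‖f‖_∞ ‖Avg T^{a(n)} f̃‖₂`, while it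
tends to `‖f̃‖₂² > 0`. The bound `‖f‖_∞` and the zero mean pass to the weak limit.
-/

open MeasureTheory Filter Topology ComplexConjugate

theorem limsup_pos_of_tendsto_of_le_mul {r y : ℕ → ℝ} {ℓ c : ℝ} (hr : Tendsto r atTop (𝓝 ℓ))
    (hℓ : 0 < ℓ) (hc : 0 < c) (hry : ∀ k, r k ≤ c * y k) (hy : IsBoundedUnder (· ≤ ·) atTop y) :
    0 < limsup y atTop :=
  calc 0 < ℓ / c := div_pos hℓ hc
    _ = limsup (fun k => r k / c) atTop := (hr.div_const c).limsup_eq.symm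
    _ ≤ limsup y atTop := limsup_le_limsup
          (Eventually.of_forall fun k => (div_le_iff₀' hc).2 (hry k))
          (hr.div_const c).isCoboundedUnder_le hy

section WeakCompactness

variable {𝕜 E : Type*} [RCLike 𝕜] [NormedAddCommGroup E] [InnerProductSpace 𝕜 E] [CompleteSpace E]

theorem exists_subseq_tendsto_inner {u : ℕ → E} {C : ℝ} (hu : ∀ k, ‖u k‖ ≤ C) :
    ∃ (φ : ℕ → ℕ) (v : E), StrictMono φ ∧
      ∀ w : E, Tendsto (fun k => inner 𝕜 (u (φ k)) w) atTop (𝓝 (inner 𝕜 v w)) := by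
  -- Banach–Alaoglu in the separable closed span `K` of the sequence; the component of `w`
  -- orthogonal to `K` pairs trivially with every `u k`.
  set K := (Submodule.span 𝕜 (Set.range u)).topologicalClosure
  have : TopologicalSpace.SeparableSpace K :=
    (Set.countable_range u).isSeparable.span.closure.separableSpace
  have hmem : ∀ k, u k ∈ K := fun k =>
    Submodule.le_topologicalClosure _ (Submodule.subset_span ⟨k, rfl⟩)
  have hC : 0 ≤ C := (norm_nonneg _).trans (hu 0)
  let ψ : ℕ → StrongDual 𝕜 K := fun k => (innerSL 𝕜 (u k)).comp K.subtypeL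
  have hψ : ∀ k, ψ k ∈ Metric.closedBall 0 C := fun k => by
    rw [mem_closedBall_zero_iff]
    refine ContinuousLinearMap.opNorm_le_bound _ hC fun w => ?_
    exact (norm_inner_le_norm _ _).trans (mul_le_mul_of_nonneg_right (hu k) (norm_nonneg _))
  obtain ⟨ψlim, -, φ, hφ, hlim⟩ :=
    WeakDual.isSeqCompact_closedBall 𝕜 K 0 C (x := fun k => StrongDual.toWeakDual (ψ k)) hψ
  refine ⟨φ, (InnerProductSpace.toDual 𝕜 K).symm (WeakDual.toStrongDual ψlim), hφ, fun w => ?_⟩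
  have hproj : ∀ x ∈ K, inner 𝕜 x w = inner 𝕜 x (K.starProjection w) := fun x hx => by
    rw [← K.inner_starProjection_left_eq_right, K.starProjection_eq_self_iff.2 hx]
  rw [hproj _ (Submodule.coe_mem _)]
  simp_rw [hproj _ (hmem _)]
  rw [K.starProjection_apply, ← Submodule.coe_inner, InnerProductSpace.toDual_symm_apply]
  exact ((WeakDual.eval_continuous (K.orthogonalProjectionOnto w)).tendsto _).comp hlim

end WeakCompactness

section Excess

-- The part of `z` outside the closed disc of radius `C` (for `C ≥ 0`).
noncomputable def excess (C : ℝ) (z : ℂ) : ℂ := ((max (‖z‖ - C) 0 / ‖z‖ : ℝ) : ℂ) * z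

theorem measurable_excess (C : ℝ) : Measurable (excess C) := by
  unfold excess
  fun_prop

theorem norm_excess {C : ℝ} (hC : 0 ≤ C) (z : ℂ) : ‖excess C z‖ = max (‖z‖ - C) 0 := by
  rcases eq_or_ne ‖z‖ 0 with hz | hz
  · simp [excess, hz, hC]
  · simp [excess, abs_of_nonneg (le_max_right (‖z‖ - C) 0), hz]

theorem mul_conj_excess (C : ℝ) (z : ℂ) :
    z * conj (excess C z) = ((max (‖z‖ - C) 0 * ‖z‖ : ℝ) : ℂ) := by
  rcases eq_or_ne ‖z‖ 0 with hz | hz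
  · simp [norm_eq_zero.1 hz]
  · simp only [excess, map_mul, Complex.conj_ofReal]
    rw [mul_left_comm, Complex.mul_conj']
    push_cast
    field_simp

end Excess

section WeakL2

variable {X : Type*} [MeasurableSpace X] {μ : Measure X}

def TendstoWeaklyL2 (μ : Measure X) (u : ℕ → X → ℂ) (v : X → ℂ) : Prop :=
  ∀ h : X → ℂ, MemLp h 2 μ →
    Tendsto (fun k => ∫ x, u k x * conj (h x) ∂μ) atTop (𝓝 (∫ x, v x * conj (h x) ∂μ))

theorem integral_mul_conj_eq_inner {f h : X → ℂ} (hf : MemLp f 2 μ) (hh : MemLp h 2 μ) :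
    ∫ x, f x * conj (h x) ∂μ = inner ℂ (hh.toLp h) (hf.toLp f) := by
  rw [L2.inner_def]
  refine integral_congr_ae ?_
  filter_upwards [hf.coeFn_toLp, hh.coeFn_toLp] with x hfx hhx
  rw [hfx, hhx, RCLike.inner_apply, mul_comm]

theorem integral_mul_conj_self (f : X → ℂ) :
    ∫ x, f x * conj (f x) ∂μ = ((∫ x, ‖f x‖ ^ 2 ∂μ : ℝ) : ℂ) := by
  simp_rw [Complex.mul_conj', ← Complex.ofReal_pow, integral_complex_ofReal]

theorem integral_norm_sq_eq_norm_toLp_sq {f : X → ℂ} (hf : MemLp f 2 μ) :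
    ∫ x, ‖f x‖ ^ 2 ∂μ = ‖hf.toLp f‖ ^ 2 := by
  rw [norm_sq_eq_re_inner (𝕜 := ℂ), ← integral_mul_conj_eq_inner hf hf, integral_mul_conj_self]
  exact (RCLike.ofReal_re _).symm

theorem norm_integral_mul_sq_le [IsProbabilityMeasure μ] {p q : X → ℂ} {C : ℝ} (hC : 0 ≤ C)
    (hp : AEStronglyMeasurable p μ) (hpC : ∀ᵐ x ∂μ, ‖p x‖ ≤ C) (hq : MemLp q 2 μ) :
    ‖∫ x, p x * q x ∂μ‖ ^ 2 ≤ C ^ 2 * ∫ x, ‖q x‖ ^ 2 ∂μ := by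
  have hpC' : ∀ᵐ x ∂μ, ‖conj (p x)‖ ≤ C := by simpa using hpC
  have hp' : MemLp (fun x => conj (p x)) 2 μ :=
    (memLp_top_of_bound hp.star C hpC').mono_exponent le_top
  have hnorm : ‖hp'.toLp _‖ ≤ C := by
    refine (Lp.norm_le_of_ae_bound hC ?_).trans_eq (by simp [measureUnivNNReal])
    filter_upwards [hp'.coeFn_toLp, hpC'] with x hx hxC
    rwa [hx]
  have hpq : ∫ x, p x * q x ∂μ = inner ℂ (hp'.toLp _) (hq.toLp q) := by
    simp_rw [← integral_mul_conj_eq_inner hq hp', Complex.conj_conj, mul_comm]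
  rw [hpq, integral_norm_sq_eq_norm_toLp_sq hq, ← mul_pow]
  gcongr
  exact (norm_inner_le_norm _ _).trans (by gcongr)

theorem exists_subseq_tendstoWeaklyL2 [IsFiniteMeasure μ] {u : ℕ → X → ℂ} {C : ℝ}
    (hu : ∀ k, AEStronglyMeasurable (u k) μ) (huC : ∀ k, ∀ᵐ x ∂μ, ‖u k x‖ ≤ C) :
    ∃ (φ : ℕ → ℕ) (v : X → ℂ), StrictMono φ ∧ MemLp v 2 μ ∧
      TendstoWeaklyL2 μ (fun k => u (φ k)) v := by
  have hu2 : ∀ k, MemLp (u k) 2 μ := fun k =>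
    (memLp_top_of_bound (hu k) C (huC k)).mono_exponent le_top
  have hbound : ∀ k,
      ‖(hu2 k).toLp (u k)‖ ≤ measureUnivNNReal μ ^ (2 : ENNReal).toReal⁻¹ * max C 0 :=
    fun k => Lp.norm_le_of_ae_bound (le_max_right C 0) <| by
      filter_upwards [(hu2 k).coeFn_toLp, huC k] with x hx hxC
      exact hx ▸ hxC.trans (le_max_left C 0)
  obtain ⟨φ, v, hφ, hv⟩ := exists_subseq_tendsto_inner (𝕜 := ℂ) hbound
  refine ⟨φ, v, hφ, Lp.memLp v, fun h hh => ?_⟩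
  simp_rw [integral_mul_conj_eq_inner (hu2 _) hh, integral_mul_conj_eq_inner (Lp.memLp v) hh,
    Lp.toLp_coeFn, ← inner_conj_symm (hh.toLp h)]
  exact (Complex.continuous_conj.tendsto _).comp (hv _)

theorem TendstoWeaklyL2.tendsto_integral_mul {u : ℕ → X → ℂ} {v : X → ℂ}
    (hlim : TendstoWeaklyL2 μ u v) {q : X → ℂ} (hq : MemLp q 2 μ) :
    Tendsto (fun k => ∫ x, u k x * q x ∂μ) atTop (𝓝 (∫ x, v x * q x ∂μ)) := by
  simpa using hlim _ hq.star

theorem TendstoWeaklyL2.tendsto_integral [IsFiniteMeasure μ] {u : ℕ → X → ℂ} {v : X → ℂ}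
    (hlim : TendstoWeaklyL2 μ u v) :
    Tendsto (fun k => ∫ x, u k x ∂μ) atTop (𝓝 (∫ x, v x ∂μ)) := by
  simpa using hlim.tendsto_integral_mul (memLp_const 1)

theorem TendstoWeaklyL2.integral_excess_mul_le [IsFiniteMeasure μ] {u : ℕ → X → ℂ} {v : X → ℂ}
    {C : ℝ} (hlim : TendstoWeaklyL2 μ u v) (hC : 0 ≤ C) (huC : ∀ k, ∀ᵐ x ∂μ, ‖u k x‖ ≤ C)
    (hv : MemLp v 2 μ) :
    ∫ x, max (‖v x‖ - C) 0 * ‖v x‖ ∂μ ≤ C * ∫ x, max (‖v x‖ - C) 0 ∂μ := by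
  have hexcess_le : ∀ x, ‖excess C (v x)‖ ≤ ‖v x‖ := fun x => by
    rw [norm_excess hC]
    exact max_le (by linarith) (norm_nonneg _)
  have hh : MemLp (fun x => excess C (v x)) 2 μ := hv.of_le
    ((measurable_excess C).comp_aemeasurable hv.1.aemeasurable).aestronglyMeasurable
    (ae_of_all _ hexcess_le)
  have ht : Integrable (fun x => ‖excess C (v x)‖) μ := (hh.integrable one_le_two).norm
  have hbound : ∀ k, ‖∫ x, u k x * conj (excess C (v x)) ∂μ‖ ≤ C * ∫ x, ‖excess C (v x)‖ ∂μ :=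
    fun k => by
      rw [← integral_const_mul]
      refine norm_integral_le_of_norm_le (ht.const_mul C) ?_
      filter_upwards [huC k] with x hx
      rw [norm_mul, RCLike.norm_conj]
      exact mul_le_mul_of_nonneg_right hx (norm_nonneg _)
  have := le_of_tendsto (hlim _ hh).norm (Eventually.of_forall hbound)
  simp_rw [mul_conj_excess, norm_excess hC, integral_complex_ofReal, Complex.norm_real,
    Real.norm_eq_abs] at this
  exact (le_abs_self _).trans this

theorem TendstoWeaklyL2.ae_norm_le [IsFiniteMeasure μ] {u : ℕ → X → ℂ} {v : X → ℂ} {C : ℝ}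
    (hlim : TendstoWeaklyL2 μ u v) (hC : 0 ≤ C) (huC : ∀ k, ∀ᵐ x ∂μ, ‖u k x‖ ≤ C)
    (hv : MemLp v 2 μ) : ∀ᵐ x ∂μ, ‖v x‖ ≤ C := by
  set t : X → ℝ := fun x => max (‖v x‖ - C) 0
  have ht_le : ∀ x, t x ≤ ‖v x‖ := fun x => max_le (by linarith) (norm_nonneg _)
  have ht_nonneg : ∀ x, 0 ≤ t x := fun x => le_max_right _ _
  have hvm : AEStronglyMeasurable v μ := hv.1
  have hsq : Integrable (fun x => ‖v x‖ ^ 2) μ := (memLp_two_iff_integrable_sq_norm hvm).1 hv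
  have ht : Integrable t μ := (hv.integrable one_le_two).norm.mono' (by fun_prop)
    (ae_of_all _ fun x => by simpa [abs_of_nonneg (ht_nonneg x)] using ht_le x)
  have ht2 : Integrable (fun x => t x ^ 2) μ := hsq.mono' (by fun_prop) (ae_of_all _ fun x => by
    simpa [abs_of_nonneg (ht_nonneg x)] using pow_le_pow_left₀ (ht_nonneg x) (ht_le x) 2)
  have htv : Integrable (fun x => t x * ‖v x‖) μ := hsq.mono' (by fun_prop) (ae_of_all _ fun x => by
    simpa [abs_of_nonneg (ht_nonneg x), sq] using
      mul_le_mul_of_nonneg_right (ht_le x) (norm_nonneg (v x)))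
  have hsq_eq : ∀ x, t x ^ 2 = t x * ‖v x‖ - C * t x := fun x => by
    rcases le_total (‖v x‖ - C) 0 with hx | hx
    · simp [t, max_eq_right hx]
    · simp only [t, max_eq_left hx]; ring
  have hzero : ∫ x, t x ^ 2 ∂μ = 0 := by
    refine le_antisymm ?_ (integral_nonneg fun x => sq_nonneg _)
    simp_rw [hsq_eq]
    rw [integral_sub htv (ht.const_mul C), integral_const_mul]
    linarith [hlim.integral_excess_mul_le hC huC hv]
  filter_upwards [(integral_eq_zero_iff_of_nonneg (fun x => sq_nonneg (t x)) ht2).1 hzero]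
    with x hx
  have : t x = 0 := pow_eq_zero_iff two_ne_zero |>.1 hx
  simp only [t, max_eq_right_iff] at this
  linarith

end WeakL2

theorem MeasureTheory.MeasurePreserving.integral_comp_of_aestronglyMeasurable {X Y E : Type*}
    [MeasurableSpace X] [MeasurableSpace Y] [NormedAddCommGroup E] [NormedSpace ℝ E]
    {μ : Measure X} {ν : Measure Y} {τ : X → Y} (hτ : MeasurePreserving τ μ ν) {F : Y → E}
    (hF : AEStronglyMeasurable F ν) : ∫ x, F (τ x) ∂μ = ∫ y, F y ∂ν := by
  rw [← integral_map hτ.aemeasurable (hτ.map_eq.symm ▸ hF), hτ.map_eq]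

section ErgodicAverage

noncomputable def ergAvg {X : Type*} (T : ℤ → X → X) (b : ℕ → ℤ) (F : X → ℂ) (N : ℕ) (x : X) :
    ℂ :=
  (N : ℂ)⁻¹ * ∑ n ∈ Finset.Icc 1 N, F (T (b n) x)

variable {X : Type*} {T : ℤ → X → X}

theorem ergAvg_conj (b : ℕ → ℤ) (F : X → ℂ) (N : ℕ) (x : X) :
    ergAvg T b (fun y => conj (F y)) N x = conj (ergAvg T b F N x) := by
  simp [ergAvg, map_sum]

variable [MeasurableSpace X] {μ : Measure X}

theorem ergAvg_aestronglyMeasurable (hT : ∀ n, MeasurePreserving (T n) μ μ) (b : ℕ → ℤ)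
    {F : X → ℂ} (hF : AEStronglyMeasurable F μ) (N : ℕ) :
    AEStronglyMeasurable (ergAvg T b F N) μ :=
  (Finset.aestronglyMeasurable_fun_sum _ fun n _ =>
    hF.comp_quasiMeasurePreserving (hT (b n)).quasiMeasurePreserving).const_mul _

theorem ae_norm_ergAvg_le (hT : ∀ n, MeasurePreserving (T n) μ μ) (b : ℕ → ℤ) {F : X → ℂ}
    {C : ℝ} (hC : 0 ≤ C) (hF : ∀ᵐ x ∂μ, ‖F x‖ ≤ C) (N : ℕ) :
    ∀ᵐ x ∂μ, ‖ergAvg T b F N x‖ ≤ C := by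
  have hFT : ∀ᵐ x ∂μ, ∀ n ∈ Finset.Icc 1 N, ‖F (T (b n) x)‖ ≤ C :=
    (eventually_all_finset _).2 fun n _ => (hT (b n)).quasiMeasurePreserving.ae hF
  filter_upwards [hFT] with x hx
  rcases Nat.eq_zero_or_pos N with rfl | hN
  · simpa [ergAvg] using hC
  calc ‖ergAvg T b F N x‖ ≤ (N : ℝ)⁻¹ * ∑ n ∈ Finset.Icc 1 N, ‖F (T (b n) x)‖ := by
        rw [ergAvg, norm_mul, norm_inv, Complex.norm_natCast]
        gcongr
        exact norm_sum_le _ _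
    _ ≤ (N : ℝ)⁻¹ * (N * C) := by
        gcongr
        simpa using Finset.sum_le_card_nsmul _ _ C hx
    _ = C := by field_simp

theorem integral_ergAvg_eq_zero (hT : ∀ n, MeasurePreserving (T n) μ μ) (b : ℕ → ℤ)
    {F : X → ℂ} (hF : Integrable F μ) (hF0 : ∫ x, F x ∂μ = 0) (N : ℕ) :
    ∫ x, ergAvg T b F N x ∂μ = 0 := by
  have hcomp : ∀ n, ∫ x, F (T n x) ∂μ = 0 := fun n =>
    ((hT n).integral_comp_of_aestronglyMeasurable hF.1).trans hF0
  have hint : ∀ n, Integrable (fun x => F (T n x)) μ := fun n =>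
    (hT n).integrable_comp_of_integrable hF
  simp_rw [ergAvg]
  rw [integral_const_mul, integral_finsetSum _ fun n _ => hint (b n)]
  simp [hcomp]

theorem integral_ergAvg_neg_mul (hT : ∀ n, MeasurePreserving (T n) μ μ)
    (hTinv : ∀ n x, T (-n) (T n x) = x) (b : ℕ → ℤ) {p q : X → ℂ} {C : ℝ}
    (hp : AEStronglyMeasurable p μ) (hpC : ∀ᵐ x ∂μ, ‖p x‖ ≤ C) (hq : Integrable q μ) (N : ℕ) :
    ∫ x, ergAvg T (fun n => -(b n)) p N x * q x ∂μ = ∫ x, p x * ergAvg T b q N x ∂μ := by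
  have hleft : ∀ n, Integrable (fun x => p (T (-n) x) * q x) μ := fun n =>
    hq.bdd_mul (hp.comp_quasiMeasurePreserving (hT (-n)).quasiMeasurePreserving)
      ((hT (-n)).quasiMeasurePreserving.ae hpC)
  have hright : ∀ n, Integrable (fun x => p x * q (T n x)) μ := fun n =>
    ((hT n).integrable_comp_of_integrable hq).bdd_mul hp hpC
  have hterm : ∀ n, ∫ x, p (T (-n) x) * q x ∂μ = ∫ x, p x * q (T n x) ∂μ := fun n => by
    rw [← (hT n).integral_comp_of_aestronglyMeasurable (hleft n).1]
    simp_rw [hTinv]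
  have hexpand_left : ∀ x, ergAvg T (fun n => -(b n)) p N x * q x =
      (N : ℂ)⁻¹ * ∑ n ∈ Finset.Icc 1 N, p (T (-(b n)) x) * q x := fun x => by
    rw [ergAvg, mul_assoc, Finset.sum_mul]
  have hexpand_right : ∀ x, p x * ergAvg T b q N x =
      (N : ℂ)⁻¹ * ∑ n ∈ Finset.Icc 1 N, p x * q (T (b n) x) := fun x => by
    rw [ergAvg, mul_left_comm, Finset.mul_sum]
  simp_rw [hexpand_left, hexpand_right]
  rw [integral_const_mul, integral_const_mul, integral_finsetSum _ fun n _ => hleft (b n),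
    integral_finsetSum _ fun n _ => hright (b n)]
  simp_rw [hterm]

end ErgodicAverage

section DualFunction

variable {X : Type*} [MeasurableSpace X] {μ : Measure X} {T : ℤ → X → X} {f : X → ℂ} {C : ℝ}

noncomputable def dualAvg (T : ℤ → X → X) (a : ℕ → ℤ) (f : X → ℂ) (N : ℕ) : X → ℂ :=
  ergAvg T (fun n => -(a n)) (fun y => conj (ergAvg T a f N y)) N

theorem ae_norm_conj_ergAvg_le (hT : ∀ n, MeasurePreserving (T n) μ μ) (a : ℕ → ℤ) (hC : 0 ≤ C)
    (hfC : ∀ᵐ x ∂μ, ‖f x‖ ≤ C) (N : ℕ) : ∀ᵐ x ∂μ, ‖conj (ergAvg T a f N x)‖ ≤ C := by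
  simpa using ae_norm_ergAvg_le hT a hC hfC N

theorem dualAvg_aestronglyMeasurable (hT : ∀ n, MeasurePreserving (T n) μ μ) (a : ℕ → ℤ)
    (hf : AEStronglyMeasurable f μ) (N : ℕ) : AEStronglyMeasurable (dualAvg T a f N) μ :=
  ergAvg_aestronglyMeasurable hT _ (ergAvg_aestronglyMeasurable hT a hf N).star N

theorem ae_norm_dualAvg_le (hT : ∀ n, MeasurePreserving (T n) μ μ) (a : ℕ → ℤ) (hC : 0 ≤ C)
    (hfC : ∀ᵐ x ∂μ, ‖f x‖ ≤ C) (N : ℕ) : ∀ᵐ x ∂μ, ‖dualAvg T a f N x‖ ≤ C :=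
  ae_norm_ergAvg_le hT _ hC (ae_norm_conj_ergAvg_le hT a hC hfC N) N

theorem integral_dualAvg_eq_zero [IsFiniteMeasure μ] (hT : ∀ n, MeasurePreserving (T n) μ μ)
    (a : ℕ → ℤ) (hf : AEStronglyMeasurable f μ) (hC : 0 ≤ C) (hfC : ∀ᵐ x ∂μ, ‖f x‖ ≤ C)
    (hf0 : ∫ x, f x ∂μ = 0) (N : ℕ) : ∫ x, dualAvg T a f N x ∂μ = 0 := by
  have hfi : Integrable f μ := (memLp_top_of_bound hf C hfC).integrable le_top
  refine integral_ergAvg_eq_zero hT _ ?_ ?_ N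
  · exact (memLp_top_of_bound (ergAvg_aestronglyMeasurable hT a hf N).star C
      (ae_norm_conj_ergAvg_le hT a hC hfC N)).integrable le_top
  · rw [integral_conj, integral_ergAvg_eq_zero hT a hfi hf0 N, map_zero]

theorem integral_dualAvg_mul (hT : ∀ n, MeasurePreserving (T n) μ μ)
    (hTinv : ∀ n x, T (-n) (T n x) = x) (a : ℕ → ℤ) (hf : AEStronglyMeasurable f μ) (hC : 0 ≤ C)
    (hfC : ∀ᵐ x ∂μ, ‖f x‖ ≤ C) {q : X → ℂ} (hq : Integrable q μ) (N : ℕ) :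
    ∫ x, dualAvg T a f N x * q x ∂μ = ∫ x, conj (ergAvg T a f N x) * ergAvg T a q N x ∂μ :=
  integral_ergAvg_neg_mul hT hTinv a (ergAvg_aestronglyMeasurable hT a hf N).star
    (ae_norm_conj_ergAvg_le hT a hC hfC N) hq N

theorem integral_dualAvg_mul_self [IsFiniteMeasure μ] (hT : ∀ n, MeasurePreserving (T n) μ μ)
    (hTinv : ∀ n x, T (-n) (T n x) = x) (a : ℕ → ℤ) (hf : AEStronglyMeasurable f μ) (hC : 0 ≤ C)
    (hfC : ∀ᵐ x ∂μ, ‖f x‖ ≤ C) (N : ℕ) :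
    ∫ x, dualAvg T a f N x * f x ∂μ = ((∫ x, ‖ergAvg T a f N x‖ ^ 2 ∂μ : ℝ) : ℂ) := by
  rw [integral_dualAvg_mul hT hTinv a hf hC hfC ((memLp_top_of_bound hf C hfC).integrable le_top),
    ← integral_mul_conj_self]
  simp_rw [mul_comm]

theorem norm_integral_dualAvg_mul_conj_sq_le [IsProbabilityMeasure μ]
    (hT : ∀ n, MeasurePreserving (T n) μ μ) (hTinv : ∀ n x, T (-n) (T n x) = x) (a : ℕ → ℤ)
    (hf : AEStronglyMeasurable f μ) (hC : 0 ≤ C) (hfC : ∀ᵐ x ∂μ, ‖f x‖ ≤ C) {q : X → ℂ}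
    (hq : MemLp q ⊤ μ) (N : ℕ) :
    ‖∫ x, dualAvg T a f N x * conj (q x) ∂μ‖ ^ 2 ≤ C ^ 2 * ∫ x, ‖ergAvg T a q N x‖ ^ 2 ∂μ := by
  have hqC := ae_le_lpNorm_exponent_top hq
  have hAq : MemLp (fun x => conj (ergAvg T a q N x)) 2 μ :=
    (memLp_top_of_bound (ergAvg_aestronglyMeasurable hT a hq.1 N).star _
      (ae_norm_conj_ergAvg_le hT a lpNorm_nonneg hqC N)).mono_exponent le_top
  rw [integral_dualAvg_mul hT hTinv a hf hC hfC (q := fun x => conj (q x))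
    (hq.star.integrable le_top)]
  simp_rw [ergAvg_conj]
  simpa using norm_integral_mul_sq_le hC (ergAvg_aestronglyMeasurable hT a hf N).star
    (ae_norm_conj_ergAvg_le hT a hC hfC N) hAq

variable {a : ℕ → ℤ} {Nk : ℕ → ℕ} {ft : X → ℂ}

theorem integral_eq_zero_of_tendstoWeaklyL2_dualAvg [IsFiniteMeasure μ]
    (hT : ∀ n, MeasurePreserving (T n) μ μ) (hf : AEStronglyMeasurable f μ) (hC : 0 ≤ C)
    (hfC : ∀ᵐ x ∂μ, ‖f x‖ ≤ C) (hf0 : ∫ x, f x ∂μ = 0)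
    (hlim : TendstoWeaklyL2 μ (fun k => dualAvg T a f (Nk k)) ft) : ∫ x, ft x ∂μ = 0 :=
  tendsto_nhds_unique (by simpa only [integral_dualAvg_eq_zero hT a hf hC hfC hf0] using
    hlim.tendsto_integral) tendsto_const_nhds

theorem tendsto_integral_norm_ergAvg_sq_of_tendstoWeaklyL2_dualAvg [IsFiniteMeasure μ]
    (hT : ∀ n, MeasurePreserving (T n) μ μ) (hTinv : ∀ n x, T (-n) (T n x) = x)
    (hf : AEStronglyMeasurable f μ) (hC : 0 ≤ C) (hfC : ∀ᵐ x ∂μ, ‖f x‖ ≤ C)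
    (hlim : TendstoWeaklyL2 μ (fun k => dualAvg T a f (Nk k)) ft) :
    Tendsto (fun k => ∫ x, ‖ergAvg T a f (Nk k) x‖ ^ 2 ∂μ) atTop
      (𝓝 (∫ x, f x * ft x ∂μ).re) := by
  have hf_lim := hlim.tendsto_integral_mul ((memLp_top_of_bound hf C hfC).mono_exponent le_top)
  simp_rw [integral_dualAvg_mul_self hT hTinv a hf hC hfC, mul_comm (ft _)] at hf_lim
  simpa only [Function.comp_def, Complex.ofReal_re] using
    (Complex.continuous_re.tendsto _).comp hf_lim

theorem limsup_integral_norm_ergAvg_sq_pos_of_tendstoWeaklyL2_dualAvg [IsProbabilityMeasure μ]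
    (hT : ∀ n, MeasurePreserving (T n) μ μ) (hTinv : ∀ n x, T (-n) (T n x) = x)
    (hf : AEStronglyMeasurable f μ) (hC : 0 < C) (hfC : ∀ᵐ x ∂μ, ‖f x‖ ≤ C)
    (hlim : TendstoWeaklyL2 μ (fun k => dualAvg T a f (Nk k)) ft) (hft : MemLp ft ⊤ μ)
    (hf_ft : 0 < (∫ x, f x * ft x ∂μ).re) :
    0 < limsup (fun k => ∫ x, ‖ergAvg T a ft (Nk k) x‖ ^ 2 ∂μ) atTop := by
  have hft_sq : 0 < ∫ x, ‖ft x‖ ^ 2 ∂μ := by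
    have h_norm : 0 < ‖∫ x, f x * ft x ∂μ‖ := hf_ft.trans_le (Complex.re_le_norm _)
    exact pos_of_mul_pos_right ((pow_pos h_norm 2).trans_le
      (norm_integral_mul_sq_le hC.le hf hfC (hft.mono_exponent le_top))) (sq_nonneg C)
  have h_self := hlim ft (hft.mono_exponent le_top)
  rw [integral_mul_conj_self] at h_self
  refine limsup_pos_of_tendsto_of_le_mul (h_self.norm.pow 2) (by simpa using pow_pos hft_sq 2)
    (pow_pos hC 2) (fun k => norm_integral_dualAvg_mul_conj_sq_le hT hTinv a hf hC.le hfC hft _) ?_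
  have hftC := ae_le_lpNorm_exponent_top hft
  refine isBoundedUnder_of ⟨lpNorm ft ⊤ μ ^ 2, fun k => (Real.le_norm_self _).trans ?_⟩
  refine (norm_integral_le_of_norm_le_const (C := lpNorm ft ⊤ μ ^ 2) ?_).trans_eq (by simp)
  filter_upwards [ae_norm_ergAvg_le hT a lpNorm_nonneg hftC (Nk k)] with x hx
  rw [norm_pow, norm_norm]
  exact pow_le_pow_left₀ (norm_nonneg _) hx 2

end DualFunction

/-- If `∫ f dμ = 0` and `limsup_N ‖𝔼_{n ∈ [N]} T^{a(n)} f‖_{L²(μ)} > 0`, then there exist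
`N_k → ∞` and `f̃ ∈ L^∞(μ)` with `∫ f̃ dμ = 0` such that `f̃` is a weak `L²` limit of averages
`𝔼_{n ∈ [N_k]} T^{−a(n)} conj(g_k)` with `‖g_k‖_∞` uniformly bounded, `∫ f ⋅ f̃ dμ > 0`, and
`limsup_k ‖𝔼_{n ∈ [N_k]} T^{a(n)} f̃‖_{L²(μ)} > 0`. -/
theorem stmt19 {X : Type*} [MeasurableSpace X] (μ : Measure X) [IsProbabilityMeasure μ]
    (T : ℤ → X → X) (hT : ∀ n, MeasurePreserving (T n) μ μ)
    (hT0 : T 0 = id) (hTadd : ∀ m n, T (m + n) = T m ∘ T n)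
    (a : ℕ → ℤ) (f : X → ℂ) (hfL : MemLp f ⊤ μ) (hf0 : ∫ x, f x ∂μ = 0)
    (hbig : 0 < Filter.limsup (fun N : ℕ =>
      ∫ x, ‖(N : ℂ)⁻¹ * ∑ n ∈ Finset.Icc 1 N, f (T (a n) x)‖ ^ 2 ∂μ) Filter.atTop) :
    ∃ (Nk : ℕ → ℕ) (g : ℕ → X → ℂ) (ft : X → ℂ) (B : ℝ),
      Tendsto Nk atTop atTop ∧
      (∀ k, MemLp (g k) ⊤ μ ∧ ∀ᵐ x ∂μ, ‖g k x‖ ≤ B) ∧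
      MemLp ft ⊤ μ ∧ (∫ x, ft x ∂μ = 0) ∧
      (∀ h : X → ℂ, MemLp h 2 μ →
        Tendsto (fun k : ℕ => ∫ x, ((Nk k : ℂ)⁻¹ * ∑ n ∈ Finset.Icc 1 (Nk k),
            (starRingEnd ℂ) (g k (T (-(a n)) x))) * (starRingEnd ℂ) (h x) ∂μ)
          atTop (nhds (∫ x, ft x * (starRingEnd ℂ) (h x) ∂μ))) ∧
      0 < (∫ x, f x * ft x ∂μ).re ∧
      0 < Filter.limsup (fun k : ℕ =>
        ∫ x, ‖(Nk k : ℂ)⁻¹ * ∑ n ∈ Finset.Icc 1 (Nk k), ft (T (a n) x)‖ ^ 2 ∂μ)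
        Filter.atTop := by
  have hTinv : ∀ n x, T (-n) (T n x) = x := fun n x => by
    simpa [hT0] using (congrFun (hTadd (-n) n) x).symm
  set C := lpNorm f ⊤ μ + 1
  have hC : 0 < C := add_pos_of_nonneg_of_pos lpNorm_nonneg one_pos
  have hfC : ∀ᵐ x ∂μ, ‖f x‖ ≤ C := (ae_le_lpNorm_exponent_top hfL).mono fun x hx => by linarith
  set s : ℕ → ℝ := fun N => ∫ x, ‖ergAvg T a f N x‖ ^ 2 ∂μ
  obtain ⟨φ, hφ, hsφ⟩ : ∃ φ : ℕ → ℕ, StrictMono φ ∧ ∀ k, limsup s atTop / 2 < s (φ k) :=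
    extraction_of_frequently_atTop <| frequently_lt_of_lt_limsup
      (isBoundedUnder_of ⟨0, fun N => integral_nonneg fun x => sq_nonneg _⟩).isCoboundedUnder_le
      (half_lt_self hbig)
  obtain ⟨ψ, ft, hψ, hft, hlim⟩ := exists_subseq_tendstoWeaklyL2
    (fun k => dualAvg_aestronglyMeasurable hT a hfL.1 (φ k))
    (fun k => ae_norm_dualAvg_le hT a hC.le hfC (φ k))
  have hftL : MemLp ft ⊤ μ := memLp_top_of_bound hft.1 C
    (hlim.ae_norm_le hC.le (fun k => ae_norm_dualAvg_le hT a hC.le hfC _) hft)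
  have hf_ft : 0 < (∫ x, f x * ft x ∂μ).re :=
    (half_pos hbig).trans_le <| ge_of_tendsto
      (tendsto_integral_norm_ergAvg_sq_of_tendstoWeaklyL2_dualAvg hT hTinv hfL.1 hC.le hfC hlim)
      (Eventually.of_forall fun k => (hsφ _).le)
  exact ⟨φ ∘ ψ, fun k => ergAvg T a f (φ (ψ k)), ft, C, (hφ.comp hψ).tendsto_atTop,
    fun k => ⟨memLp_top_of_bound (ergAvg_aestronglyMeasurable hT a hfL.1 _) C
      (ae_norm_ergAvg_le hT a hC.le hfC _), ae_norm_ergAvg_le hT a hC.le hfC _⟩, hftL,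
    integral_eq_zero_of_tendstoWeaklyL2_dualAvg hT hfL.1 hC.le hfC hf0 hlim, hlim, hf_ft,
    limsup_integral_norm_ergAvg_sq_pos_of_tendstoWeaklyL2_dualAvg hT hTinv hfL.1 hC hfC hlim
      hftL hf_ft⟩
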